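/- arXiv:1907.04726 — 7 statements merged into one kernel-verified Lean document; each statement's English description precedes it below -/
import Mathlib

section
/- If X ∈ M_n(ℝ) is symmetric with det X > 0 and X² = F Fᵀ for some F ∈ GL⁺(n,ℝ), then R := X F^{−T} satisfies R ∈ SO(n) and (μ−μ_c)(F Rᵀ F Rᵀ − R Fᵀ R Fᵀ) = 2μ(F Rᵀ − R Fᵀ) for all μ, μ_c ∈ ℝ; i.e., R is a critical point of the Cosserat energy. -/
/-!
Since `X` is symmetric, `R := X F⁻ᵀ` has `Rᵀ = F⁻¹ X`, so `F Rᵀ = X = R Fᵀ`; both sides of the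
criticality equation therefore vanish. Orthogonality is `Rᵀ R = F⁻¹ X² F⁻ᵀ = F⁻¹ (F Fᵀ) F⁻ᵀ = 1`, and
`det X ^ 2 = det F ^ 2` with both determinants positive gives `det X = det F`, hence `det R = 1`.
-/

open Matrix

section

variable {ι K : Type*} [Fintype ι] [DecidableEq ι] [CommRing K]

theorem Matrix.transpose_mul_inv_transpose_of_transpose_eq {F X : Matrix ι ι K} (hX : Xᵀ = X) :
    (X * (Fᵀ)⁻¹)ᵀ = F⁻¹ * X := by
  rw [transpose_mul, hX, transpose_nonsing_inv, transpose_transpose]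

theorem Matrix.mul_transpose_mul_inv_transpose {F X : Matrix ι ι K} (hF : IsUnit F.det)
    (hX : Xᵀ = X) : F * (X * (Fᵀ)⁻¹)ᵀ = X := by
  rw [transpose_mul_inv_transpose_of_transpose_eq hX, ← mul_assoc, mul_nonsing_inv F hF, one_mul]

theorem Matrix.mul_inv_transpose_mul_transpose {F X : Matrix ι ι K} (hF : IsUnit F.det) :
    X * (Fᵀ)⁻¹ * Fᵀ = X := by
  rw [mul_assoc, nonsing_inv_mul Fᵀ (by rwa [det_transpose]), mul_one]

theorem Matrix.transpose_mul_self_mul_inv_transpose {F X : Matrix ι ι K} (hF : IsUnit F.det)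
    (hX : Xᵀ = X) (hXX : X * X = F * Fᵀ) :
    (X * (Fᵀ)⁻¹)ᵀ * (X * (Fᵀ)⁻¹) = 1 := by
  have hFT : IsUnit Fᵀ.det := by rwa [det_transpose]
  calc (X * (Fᵀ)⁻¹)ᵀ * (X * (Fᵀ)⁻¹) = F⁻¹ * (X * X) * (Fᵀ)⁻¹ := by
        rw [transpose_mul_inv_transpose_of_transpose_eq hX]; simp only [mul_assoc]
    _ = 1 := by
        rw [hXX, ← mul_assoc, nonsing_inv_mul F hF, one_mul, mul_nonsing_inv Fᵀ hFT]

theorem Matrix.det_mul_inv_transpose_of_det_eq {F X : Matrix ι ι K} (hF : IsUnit F.det)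
    (hdet : X.det = F.det) : (X * (Fᵀ)⁻¹).det = 1 := by
  rw [det_mul, det_nonsing_inv, det_transpose, hdet, Ring.mul_inverse_cancel _ hF]

end

theorem Matrix.det_eq_of_mul_self_eq_mul_transpose {ι K : Type*} [Fintype ι] [DecidableEq ι]
    [CommRing K] [LinearOrder K] [IsStrictOrderedRing K] {F X : Matrix ι ι K}
    (hF : 0 < F.det) (hX : 0 < X.det) (hXX : X * X = F * Fᵀ) : X.det = F.det := by
  have hsq : X.det * X.det = F.det * F.det := by
    simpa only [det_mul, det_transpose] using congrArg det hXX
  exact (mul_self_inj hX.le hF.le).mp hsq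

theorem Matrix.cosserat_critical_of_mul_transpose_eq {ι K : Type*} [Fintype ι] [CommRing K]
    {F R : Matrix ι ι K} (h : F * Rᵀ = R * Fᵀ) (μ μc : K) :
    (μ - μc) • (F * Rᵀ * F * Rᵀ - R * Fᵀ * R * Fᵀ) = (2 * μ) • (F * Rᵀ - R * Fᵀ) := by
  rw [mul_assoc (F * Rᵀ), mul_assoc (R * Fᵀ), h, sub_self, sub_self, smul_zero, smul_zero]

theorem stmt6 (n : ℕ) (F X : Matrix (Fin n) (Fin n) ℝ)
    (hF : 0 < F.det) (hXsym : Xᵀ = X) (hXdet : 0 < X.det)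
    (hXX : X * X = F * Fᵀ) :
    (X * (Fᵀ)⁻¹)ᵀ * (X * (Fᵀ)⁻¹) = 1 ∧ (X * (Fᵀ)⁻¹).det = 1 ∧
    ∀ μ μc : ℝ,
      (μ - μc) • (F * (X * (Fᵀ)⁻¹)ᵀ * F * (X * (Fᵀ)⁻¹)ᵀ
          - (X * (Fᵀ)⁻¹) * Fᵀ * (X * (Fᵀ)⁻¹) * Fᵀ) =
        (2 * μ) • (F * (X * (Fᵀ)⁻¹)ᵀ - (X * (Fᵀ)⁻¹) * Fᵀ) := by
  have hFu : IsUnit F.det := hF.ne'.isUnit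
  have hsymm : F * (X * (Fᵀ)⁻¹)ᵀ = X * (Fᵀ)⁻¹ * Fᵀ := by
    rw [mul_transpose_mul_inv_transpose hFu hXsym, mul_inv_transpose_mul_transpose hFu]
  exact ⟨transpose_mul_self_mul_inv_transpose hFu hXsym hXX,
    det_mul_inv_transpose_of_det_eq hFu (det_eq_of_mul_self_eq_mul_transpose hF hXdet hXX),
    cosserat_critical_of_mul_transpose_eq hsymm⟩
end

section
/- (SO(2) critical points) Let D = diag(λ₁, λ₂) with λ₁ ≥ λ₂ > 0, and for θ ∈ ℝ let R(θ) be the rotation by angle θ. The function W(θ) = ‖sym(R(θ)ᵀD − I)‖² satisfies: the critical points of W on [0, 2π) are exactly θ = 0, θ = π, and, when λ₁ + λ₂ > 2, additionally the two angles θ with cos θ = 2/(λ₁+λ₂). -/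
open Matrix Real

/-!
In closed form `W θ = (l₁ cos θ - 1)² + (l₂ cos θ - 1)² + sin² θ (l₁ - l₂)² / 2`, so
`W' θ = -sin θ (l₁ + l₂) ((l₁ + l₂) cos θ - 2)`. Since `l₁ + l₂ > 0`, the critical points are the
zeros `0, π` of `sin` on `[0, 2π)` together with the solutions of `cos θ = 2 / (l₁ + l₂)`; the
latter are new only when `l₁ + l₂ > 2`, since otherwise they force `cos θ = 1`.
-/

noncomputable def rotationMatrix (θ : ℝ) : Matrix (Fin 2) (Fin 2) ℝ :=
  !![cos θ, -sin θ; sin θ, cos θ]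

noncomputable def symmPart {n : Type*} (X : Matrix n n ℝ) : Matrix n n ℝ := (1/2 : ℝ) • (X + Xᵀ)

noncomputable def rotationEnergy (l1 l2 θ : ℝ) : ℝ :=
  (l1 * cos θ - 1) ^ 2 + (l2 * cos θ - 1) ^ 2 + sin θ ^ 2 * ((l1 - l2) ^ 2 / 2)

-- The off-diagonal entries of `symmPart (Rᵀ D - 1)` are both `(l₂ - l₁) sin θ / 2`.
lemma trace_symmPart_sq_eq_rotationEnergy (l1 l2 θ : ℝ) :
    trace ((symmPart ((rotationMatrix θ)ᵀ * !![l1, 0; 0, l2] - 1))ᵀ *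
      symmPart ((rotationMatrix θ)ᵀ * !![l1, 0; 0, l2] - 1)) = rotationEnergy l1 l2 θ := by
  simp only [symmPart, rotationMatrix, rotationEnergy, one_div, transpose_sub, transpose_mul,
    transpose_transpose, transpose_one, smul_add, transpose_add, transpose_smul, trace_fin_two,
    Fin.isValue, Matrix.mul_apply, Matrix.add_apply, Matrix.smul_apply, Matrix.sub_apply,
    transpose_apply, of_apply, cons_val', cons_val_zero, cons_val_fin_one, Fin.sum_univ_two,
    cons_val_one, zero_mul, add_zero, Matrix.one_apply, smul_eq_mul, mul_zero, ↓reduceIte, mul_neg,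
    zero_ne_one, sub_zero, zero_add, neg_mul, one_ne_zero, neg_zero]
  ring

lemma hasDerivAt_rotationEnergy (l1 l2 θ : ℝ) :
    HasDerivAt (rotationEnergy l1 l2) (-sin θ * (l1 + l2) * ((l1 + l2) * cos θ - 2)) θ := by
  have hc := hasDerivAt_cos θ
  have h := ((((hc.const_mul l1).sub_const 1).pow 2).add
    (((hc.const_mul l2).sub_const 1).pow 2)).add
    (((hasDerivAt_sin θ).pow 2).mul_const ((l1 - l2) ^ 2 / 2))
  refine h.congr_deriv ?_
  norm_num
  ring

lemma sin_eq_zero_iff_of_mem_Ico {θ : ℝ} (hθ : θ ∈ Set.Ico 0 (2 * π)) :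
    sin θ = 0 ↔ θ = 0 ∨ θ = π := by
  refine ⟨fun h => ?_, by rintro (rfl | rfl) <;> simp⟩
  obtain ⟨n, rfl⟩ := sin_eq_zero_iff.1 h
  have hn0 : (0 : ℝ) ≤ n := le_of_mul_le_mul_right (by simpa using hθ.1) pi_pos
  have hn2 : (n : ℝ) < 2 := lt_of_mul_lt_mul_right hθ.2 pi_pos.le
  have h0 : 0 ≤ n := by exact_mod_cast hn0
  have h2 : n < 2 := by exact_mod_cast hn2
  interval_cases n <;> simp

lemma sin_eq_zero_or_cos_eq_div_iff {s θ : ℝ} (hs : 0 < s) :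
    sin θ = 0 ∨ cos θ = 2 / s ↔ sin θ = 0 ∨ (s > 2 ∧ cos θ = 2 / s) := by
  refine ⟨?_, by tauto⟩
  rintro (h | h)
  · exact Or.inl h
  by_cases h2 : s > 2
  · exact Or.inr ⟨h2, h⟩
  have hcos : 1 ≤ cos θ := by rw [h, le_div_iff₀ hs]; linarith
  left
  nlinarith [sin_sq_add_cos_sq θ, cos_le_one θ]

theorem stmt9 (l1 l2 : ℝ) (hl : l1 ≥ l2) (hl2 : l2 > 0)
    (W : ℝ → ℝ)
    (hW : W = fun θ : ℝ =>
      Matrix.trace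
        (((1/2 : ℝ) • (((!![Real.cos θ, -Real.sin θ; Real.sin θ, Real.cos θ])ᵀ *
            !![l1, 0; 0, l2] - 1)
          + ((!![Real.cos θ, -Real.sin θ; Real.sin θ, Real.cos θ])ᵀ *
            !![l1, 0; 0, l2] - 1)ᵀ))ᵀ *
         ((1/2 : ℝ) • (((!![Real.cos θ, -Real.sin θ; Real.sin θ, Real.cos θ])ᵀ *
            !![l1, 0; 0, l2] - 1)
          + ((!![Real.cos θ, -Real.sin θ; Real.sin θ, Real.cos θ])ᵀ *
            !![l1, 0; 0, l2] - 1)ᵀ))))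
    (θ : ℝ) (hθ : θ ∈ Set.Ico 0 (2 * π)) :
    deriv W θ = 0 ↔
      θ = 0 ∨ θ = π ∨ (l1 + l2 > 2 ∧ Real.cos θ = 2 / (l1 + l2)) := by
  have hs : 0 < l1 + l2 := by linarith
  have hW' : W = rotationEnergy l1 l2 := by
    rw [hW]
    funext t
    exact trace_symmPart_sq_eq_rotationEnergy l1 l2 t
  have hcrit : deriv W θ = 0 ↔ sin θ = 0 ∨ cos θ = 2 / (l1 + l2) := by
    rw [hW', (hasDerivAt_rotationEnergy l1 l2 θ).deriv, eq_div_iff hs.ne', mul_comm (cos θ),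
      ← sub_eq_zero (b := 2)]
    simp [hs.ne']
  rw [hcrit, sin_eq_zero_or_cos_eq_div_iff hs, sin_eq_zero_iff_of_mem_Ico hθ, or_assoc]
end

section
/- (SO(2) global minimum, case λ₁+λ₂ ≤ 2) Let λ₁ ≥ λ₂ > 0 with λ₁+λ₂ ≤ 2 and D = diag(λ₁,λ₂). Then for every R ∈ SO(2), ‖sym(RᵀD − I)‖² ≥ (λ₁−1)² + (λ₂−1)², with equality iff R = I. -/
/-!
For R = R(θ) the energy is a quadratic in c = cos θ (using sin²θ = 1 − c²), and its excess over
the value at c = 1 factors as (1 − c)(λ₁ + λ₂)(2 − (1 + c)(λ₁ + λ₂)/2). When 0 < λ₁ + λ₂ ≤ 2 and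
c ∈ [−1, 1] all three factors are nonnegative, and the product vanishes only at c = 1, i.e. R = I.
-/

open Matrix Set

noncomputable def symFrobeniusSq {n : Type*} [Fintype n] (X : Matrix n n ℝ) : ℝ :=
  trace (((1/2 : ℝ) • (X + Xᵀ))ᵀ * ((1/2 : ℝ) • (X + Xᵀ)))

lemma symFrobeniusSq_fin_two (X : Matrix (Fin 2) (Fin 2) ℝ) :
    symFrobeniusSq X = X 0 0 ^ 2 + X 1 1 ^ 2 + (X 0 1 + X 1 0) ^ 2 / 2 := by
  simp [symFrobeniusSq, trace_fin_two, mul_apply]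
  ring

noncomputable def so2Energy (l1 l2 c : ℝ) : ℝ :=
  (l1 * c - 1) ^ 2 + (l2 * c - 1) ^ 2 + (1 - c ^ 2) * (l1 - l2) ^ 2 / 2

lemma so2Energy_one (l1 l2 : ℝ) : so2Energy l1 l2 1 = (l1 - 1) ^ 2 + (l2 - 1) ^ 2 := by
  simp [so2Energy]

lemma so2Energy_sub_so2Energy_one (l1 l2 c : ℝ) :
    so2Energy l1 l2 c - so2Energy l1 l2 1 =
      (1 - c) * (l1 + l2) * (2 - (1 + c) * (l1 + l2) / 2) := by
  unfold so2Energy; ring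

lemma so2Energy_one_le {l1 l2 c : ℝ} (hs : 0 ≤ l1 + l2) (hs2 : l1 + l2 ≤ 2)
    (hc : c ∈ Icc (-1) 1) : so2Energy l1 l2 1 ≤ so2Energy l1 l2 c := by
  have hdiff := so2Energy_sub_so2Energy_one l1 l2 c
  have h : 0 ≤ 2 - (1 + c) * (l1 + l2) / 2 := by nlinarith [hc.1, hc.2]
  nlinarith [mul_nonneg (mul_nonneg (sub_nonneg.2 hc.2) hs) h]

lemma so2Energy_eq_so2Energy_one_iff {l1 l2 c : ℝ} (hs : 0 < l1 + l2) (hs2 : l1 + l2 ≤ 2)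
    (hc : c ∈ Icc (-1) 1) : so2Energy l1 l2 c = so2Energy l1 l2 1 ↔ c = 1 := by
  rw [← sub_eq_zero, so2Energy_sub_so2Energy_one]
  constructor
  · intro h
    by_contra hne
    have hc1 : 0 < 1 - c := sub_pos.2 (lt_of_le_of_ne hc.2 hne)
    have h2 : 0 < 2 - (1 + c) * (l1 + l2) / 2 := by nlinarith [hc.1]
    exact (mul_pos (mul_pos hc1 hs) h2).ne' h
  · rintro rfl; ring

lemma Matrix.eq_one_iff_of_mem_specialOrthogonalGroup_fin_two {R : Matrix (Fin 2) (Fin 2) ℝ}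
    (hR : R ∈ specialOrthogonalGroup (Fin 2) ℝ) : R = 1 ↔ R 0 0 = 1 := by
  obtain ⟨h00, h01, hsq⟩ := mem_specialOrthogonalGroup_fin_two_iff.mp hR
  refine ⟨fun h ↦ by simp [h], fun h ↦ ?_⟩
  have hb : R 0 1 = 0 := by nlinarith
  ext i j; fin_cases i <;> fin_cases j <;> simp <;> linarith

lemma symFrobeniusSq_transpose_mul_diag_sub_one {R : Matrix (Fin 2) (Fin 2) ℝ}
    (hR : R ∈ specialOrthogonalGroup (Fin 2) ℝ) (l1 l2 : ℝ) :
    symFrobeniusSq (Rᵀ * !![l1, 0; 0, l2] - 1) = so2Energy l1 l2 (R 0 0) := by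
  obtain ⟨h11, h01, hsq⟩ := mem_specialOrthogonalGroup_fin_two_iff.mp hR
  have h10 : R 1 0 = -R 0 1 := by rw [h01, neg_neg]
  simp [symFrobeniusSq_fin_two, mul_apply, Fin.sum_univ_two, ← h11, h10, so2Energy]
  linear_combination (l1 - l2) ^ 2 / 2 * hsq

theorem stmt11 (l1 l2 : ℝ) (hl : l1 ≥ l2) (hl2 : l2 > 0) (hsum : l1 + l2 ≤ 2)
    (W : Matrix (Fin 2) (Fin 2) ℝ → ℝ)
    (hW : W = fun R =>
      Matrix.trace (((1/2 : ℝ) • ((Rᵀ * !![l1, 0; 0, l2] - 1)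
          + (Rᵀ * !![l1, 0; 0, l2] - 1)ᵀ))ᵀ *
        ((1/2 : ℝ) • ((Rᵀ * !![l1, 0; 0, l2] - 1)
          + (Rᵀ * !![l1, 0; 0, l2] - 1)ᵀ)))) :
    ∀ R : Matrix (Fin 2) (Fin 2) ℝ, Rᵀ * R = 1 → R.det = 1 →
      (l1 - 1)^2 + (l2 - 1)^2 ≤ W R ∧
      (W R = (l1 - 1)^2 + (l2 - 1)^2 ↔ R = 1) := by
  intro R hO hdet
  have hR : R ∈ specialOrthogonalGroup (Fin 2) ℝ :=
    mem_specialOrthogonalGroup_iff.mpr ⟨(mem_orthogonalGroup_iff' _ _).mpr hO, hdet⟩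
  have hWR : W R = so2Energy l1 l2 (R 0 0) := by
    rw [hW, ← symFrobeniusSq_transpose_mul_diag_sub_one hR]; rfl
  have hc : R 0 0 ∈ Icc (-1) 1 := by
    obtain ⟨-, -, hsq⟩ := mem_specialOrthogonalGroup_fin_two_iff.mp hR
    constructor <;> nlinarith [sq_nonneg (R 0 1)]
  have hs : 0 < l1 + l2 := by linarith
  rw [hWR, eq_one_iff_of_mem_specialOrthogonalGroup_fin_two hR, ← so2Energy_one]
  exact ⟨so2Energy_one_le hs.le hsum hc, so2Energy_eq_so2Energy_one_iff hs hsum hc⟩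
end

section
/- (SO(2) global minimum, case λ₁+λ₂ > 2) Let λ₁ ≥ λ₂ > 0 with λ₁+λ₂ > 2 and D = diag(λ₁,λ₂). Then for every R ∈ SO(2), ‖sym(RᵀD − I)‖² ≥ (λ₁−λ₂)²/2, with equality exactly for the two rotations R(±θ₀) where cos θ₀ = 2/(λ₁+λ₂). -/
/-!
Every `R ∈ SO(2)` is a rotation `!![a, -b; b, a]` with `a² + b² = 1`, and on such a rotation the
energy is `(λ₁ - λ₂)²/2 + ((λ₁ + λ₂)a - 2)²/2`. The bound follows, with equality exactly when
`a = 2/(λ₁ + λ₂)`, i.e. `b = ±√(1 - a²)`.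
-/

open Matrix

def rot (a b : ℝ) : Matrix (Fin 2) (Fin 2) ℝ := !![a, -b; b, a]

theorem rot_inj {a b a' b' : ℝ} : rot a b = rot a' b' ↔ a = a' ∧ b = b' := by
  simp [rot]
  tauto

attribute [local instance] starRingOfComm in
theorem exists_eq_rot_of_orthogonal_of_det_eq_one {R : Matrix (Fin 2) (Fin 2) ℝ}
    (hR : Rᵀ * R = 1) (hdet : R.det = 1) : ∃ a b, a ^ 2 + b ^ 2 = 1 ∧ R = rot a b := by
  obtain ⟨h00, h01, hab⟩ := mem_specialOrthogonalGroup_fin_two_iff.mp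
    ⟨(mem_orthogonalGroup_iff' _ _).mpr hR, hdet⟩
  refine ⟨R 0 0, -R 0 1, by simpa using hab, ?_⟩
  ext i j
  fin_cases i <;> fin_cases j <;> simp [rot, h00, h01]

theorem eq_sqrt_or_eq_neg_sqrt_of_sq_add_sq_eq_one {a b : ℝ} (h : a ^ 2 + b ^ 2 = 1) :
    b = √(1 - a ^ 2) ∨ b = -√(1 - a ^ 2) := by
  rw [← sq_eq_sq_iff_eq_or_eq_neg, Real.sq_sqrt (by nlinarith)]
  linarith

noncomputable def symPart {n : Type*} (A : Matrix n n ℝ) : Matrix n n ℝ := (1 / 2 : ℝ) • (A + Aᵀ)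

/-- `‖sym(RᵀD - 1)‖²` in the Frobenius norm. -/
noncomputable def symEnergy {n : Type*} [Fintype n] [DecidableEq n] (D R : Matrix n n ℝ) : ℝ :=
  trace ((symPart (Rᵀ * D - 1))ᵀ * symPart (Rᵀ * D - 1))

theorem symEnergy_diagonal_rot (l1 l2 a b : ℝ) (hab : a ^ 2 + b ^ 2 = 1) :
    symEnergy !![l1, 0; 0, l2] (rot a b) = (l1 - l2) ^ 2 / 2 + ((l1 + l2) * a - 2) ^ 2 / 2 := by
  have hexpand : symEnergy !![l1, 0; 0, l2] (rot a b) =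
      (a * l1 - 1) ^ 2 + (a * l2 - 1) ^ 2 + b ^ 2 * (l1 - l2) ^ 2 / 2 := by
    simp [symEnergy, symPart, rot, trace, mul_apply, Fin.sum_univ_two, one_apply]
    ring
  rw [hexpand]
  linear_combination ((l1 - l2) ^ 2 / 2) * hab

theorem stmt12_general (l1 l2 : ℝ) (hsum : l1 + l2 > 2)
    (W : Matrix (Fin 2) (Fin 2) ℝ → ℝ)
    (hW : W = fun R =>
      Matrix.trace (((1/2 : ℝ) • ((Rᵀ * !![l1, 0; 0, l2] - 1)
          + (Rᵀ * !![l1, 0; 0, l2] - 1)ᵀ))ᵀ *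
        ((1/2 : ℝ) • ((Rᵀ * !![l1, 0; 0, l2] - 1)
          + (Rᵀ * !![l1, 0; 0, l2] - 1)ᵀ))))
    (c s : ℝ) (hc : c = 2 / (l1 + l2)) (hs : s = Real.sqrt (1 - c^2)) :
    ∀ R : Matrix (Fin 2) (Fin 2) ℝ, Rᵀ * R = 1 → R.det = 1 →
      (l1 - l2)^2 / 2 ≤ W R ∧
      (W R = (l1 - l2)^2 / 2 ↔ (R = !![c, -s; s, c] ∨ R = !![c, s; -s, c])) := by
  intro R hR hdet
  obtain ⟨a, b, hab, rfl⟩ := exists_eq_rot_of_orthogonal_of_det_eq_one hR hdet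
  have hWR : W (rot a b) = (l1 - l2) ^ 2 / 2 + ((l1 + l2) * a - 2) ^ 2 / 2 :=
    hW ▸ symEnergy_diagonal_rot l1 l2 a b hab
  have hmin : W (rot a b) = (l1 - l2) ^ 2 / 2 ↔ a = c := by
    rw [hWR, add_eq_left, div_eq_zero_iff, or_iff_left two_ne_zero, pow_eq_zero_iff two_ne_zero,
      sub_eq_zero, hc, eq_div_iff (by linarith), mul_comm]
  refine ⟨hWR ▸ le_add_of_nonneg_right (by positivity), ?_⟩
  rw [hmin, show !![c, s; -s, c] = rot c (-s) by simp [rot]]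
  change a = c ↔ rot a b = rot c s ∨ rot a b = rot c (-s)
  rw [rot_inj, rot_inj, ← and_or_left, iff_self_and]
  rintro rfl
  exact hs ▸ eq_sqrt_or_eq_neg_sqrt_of_sq_add_sq_eq_one hab

theorem stmt12 (l1 l2 : ℝ) (hl : l1 ≥ l2) (hl2 : l2 > 0) (hsum : l1 + l2 > 2)
    (W : Matrix (Fin 2) (Fin 2) ℝ → ℝ)
    (hW : W = fun R =>
      Matrix.trace (((1/2 : ℝ) • ((Rᵀ * !![l1, 0; 0, l2] - 1)
          + (Rᵀ * !![l1, 0; 0, l2] - 1)ᵀ))ᵀ *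
        ((1/2 : ℝ) • ((Rᵀ * !![l1, 0; 0, l2] - 1)
          + (Rᵀ * !![l1, 0; 0, l2] - 1)ᵀ))))
    (c s : ℝ) (hc : c = 2 / (l1 + l2)) (hs : s = Real.sqrt (1 - c^2)) :
    ∀ R : Matrix (Fin 2) (Fin 2) ℝ, Rᵀ * R = 1 → R.det = 1 →
      (l1 - l2)^2 / 2 ≤ W R ∧
      (W R = (l1 - l2)^2 / 2 ↔ (R = !![c, -s; s, c] ∨ R = !![c, s; -s, c])) :=
  stmt12_general l1 l2 hsum W hW c s hc hs
end

section
/- (SO(3) critical values comparison, maximum) Let λ₁ ≥ λ₂ ≥ λ₃ > 0 and D = diag(λ₁,λ₂,λ₃). Then for every R ∈ SO(3), ‖sym(RᵀD − I)‖² ≤ (λ₁+1)² + (λ₂+1)² + (λ₃−1)², with equality for R = diag(−1,−1,1). -/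
/-!
In the Frobenius norm `‖sym X‖ ≤ ‖X‖`, so the energy is at most
`‖RᵀD - I‖² = ‖D‖² - 2 ∑ λᵢ Rᵢᵢ + 3`. On `SO(3)` we have `R₀₀ ≥ -1`, `R₂₂ ≤ 1` and `tr R ≥ -1`, and
`∑ λᵢ Rᵢᵢ + λ₁ + λ₂ - λ₃ = (λ₁ - λ₂)(1 + R₀₀) + (λ₂ - λ₃)(1 - R₂₂) + λ₂ (1 + tr R) ≥ 0`.
Both bounds are attained at `R = diag(-1, -1, 1)`, where `RᵀD - I` is already symmetric.
-/

open Matrix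

namespace Matrix

section Frobenius

variable {m n : Type*} [Fintype m] [Fintype n]

lemma trace_transpose_mul_self_nonneg (A : Matrix m n ℝ) : 0 ≤ trace (Aᵀ * A) :=
  Finset.sum_nonneg fun _ _ => Finset.sum_nonneg fun _ _ => mul_self_nonneg _

lemma trace_mul_self_le_trace_transpose_mul_self (A : Matrix n n ℝ) :
    trace (A * A) ≤ trace (Aᵀ * A) := by
  have hskew := trace_transpose_mul_self_nonneg (A - Aᵀ)
  have h1 : trace (Aᵀ * Aᵀ) = trace (A * A) := trace_transpose_mul A A
  have h2 : trace (A * Aᵀ) = trace (Aᵀ * A) := trace_mul_comm A Aᵀ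
  simp only [transpose_sub, transpose_transpose, sub_mul, mul_sub, trace_sub] at hskew
  linarith

lemma trace_symm_part_sq_le (A : Matrix n n ℝ) :
    trace (((1/2 : ℝ) • (A + Aᵀ))ᵀ * ((1/2 : ℝ) • (A + Aᵀ))) ≤ trace (Aᵀ * A) := by
  have h := trace_mul_self_le_trace_transpose_mul_self A
  have h1 : trace (Aᵀ * Aᵀ) = trace (A * A) := trace_transpose_mul A A
  have h2 : trace (A * Aᵀ) = trace (Aᵀ * A) := trace_mul_comm A Aᵀ
  simp only [transpose_smul, transpose_add, transpose_transpose, smul_mul_smul_comm, add_mul,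
    mul_add, trace_smul, trace_add, smul_eq_mul]
  linarith

variable [DecidableEq n]

lemma trace_sub_one_transpose_mul_self (A : Matrix n n ℝ) :
    trace ((A - 1)ᵀ * (A - 1)) = trace (Aᵀ * A) - 2 * trace A + Fintype.card n := by
  simp only [transpose_sub, transpose_one, sub_mul, mul_sub, one_mul, mul_one, trace_sub,
    trace_transpose, trace_one]
  ring

lemma trace_transpose_mul_self_transpose_mul_of_mem_orthogonalGroup {R : Matrix n n ℝ}
    (hR : R ∈ orthogonalGroup n ℝ) (B : Matrix n n ℝ) :
    trace ((Rᵀ * B)ᵀ * (Rᵀ * B)) = trace (Bᵀ * B) := by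
  rw [transpose_mul, transpose_transpose, Matrix.mul_assoc, ← Matrix.mul_assoc R,
    (mem_orthogonalGroup_iff _ _).1 hR, Matrix.one_mul]

lemma trace_transpose_mul_diagonal (R : Matrix n n ℝ) (d : n → ℝ) :
    trace (Rᵀ * diagonal d) = ∑ i, d i * R i i := by
  simp [trace, mul_comm]

end Frobenius

lemma one_add_trace_nonneg_of_mem_specialOrthogonalGroup
    {R : Matrix (Fin 3) (Fin 3) ℝ} (hR : R ∈ specialOrthogonalGroup (Fin 3) ℝ) :
    0 ≤ 1 + trace R := by
  have hRRt : R * Rᵀ = 1 := (mem_orthogonalGroup_iff _ _).1 hR.1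
  have hdet : R.det = 1 := hR.2
  have hadj : adjugate R = Rᵀ := by
    rw [← Matrix.mul_one (adjugate R), ← hRRt, ← Matrix.mul_assoc, adjugate_mul, hdet,
      one_smul, Matrix.one_mul]
  have row (i : Fin 3) : R i 0 ^ 2 + R i 1 ^ 2 + R i 2 ^ 2 = 1 := by
    have h := congrFun (congrFun hRRt i) i
    simp only [mul_apply, Fin.sum_univ_three, transpose_apply, one_apply_eq] at h
    linear_combination h
  have cof (i : Fin 3) : adjugate R i i = R i i := by rw [hadj, transpose_apply]
  have c0 := cof 0
  have c1 := cof 1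
  have c2 := cof 2
  simp only [adjugate_fin_three, of_apply, cons_val', cons_val_zero, cons_val_fin_one,
    cons_val_one, cons_val] at c0 c1 c2
  -- `adj R = Rᵀ`: each diagonal cofactor of `R` equals the corresponding diagonal entry
  have key : (1 + trace R) ^ 2 + (R 2 1 - R 1 2) ^ 2 + (R 0 2 - R 2 0) ^ 2 + (R 1 0 - R 0 1) ^ 2
      = 4 * (1 + trace R) := by
    rw [trace_fin_three]
    linear_combination row 0 + row 1 + row 2 + 2 * c0 + 2 * c1 + 2 * c2
  linarith [sq_nonneg (1 + trace R), sq_nonneg (R 2 1 - R 1 2), sq_nonneg (R 0 2 - R 2 0),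
    sq_nonneg (R 1 0 - R 0 1)]

lemma neg_add_sub_le_weighted_diag_of_mem_specialOrthogonalGroup
    {R : Matrix (Fin 3) (Fin 3) ℝ} (hR : R ∈ specialOrthogonalGroup (Fin 3) ℝ)
    {l1 l2 l3 : ℝ} (h12 : l2 ≤ l1) (h23 : l3 ≤ l2) (h2 : 0 ≤ l2) :
    -(l1 + l2 - l3) ≤ l1 * R 0 0 + l2 * R 1 1 + l3 * R 2 2 := by
  have h00 : -1 ≤ R 0 0 := (abs_le.1 (entry_norm_bound_of_unitary hR.1 0 0)).1
  have h22 : R 2 2 ≤ 1 := (abs_le.1 (entry_norm_bound_of_unitary hR.1 2 2)).2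
  have htr := one_add_trace_nonneg_of_mem_specialOrthogonalGroup hR
  rw [trace_fin_three] at htr
  linarith [mul_nonneg (sub_nonneg.2 h12) (neg_le_iff_add_nonneg.1 h00),
    mul_nonneg (sub_nonneg.2 h23) (sub_nonneg.2 h22), mul_nonneg h2 htr]

end Matrix

theorem stmt16 (l1 l2 l3 : ℝ) (h12 : l1 ≥ l2) (h23 : l2 ≥ l3) (h3 : l3 > 0)
    (W : Matrix (Fin 3) (Fin 3) ℝ → ℝ)
    (hW : W = fun R =>
      Matrix.trace (((1/2 : ℝ) • ((Rᵀ * !![l1, 0, 0; 0, l2, 0; 0, 0, l3] - 1)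
          + (Rᵀ * !![l1, 0, 0; 0, l2, 0; 0, 0, l3] - 1)ᵀ))ᵀ *
        ((1/2 : ℝ) • ((Rᵀ * !![l1, 0, 0; 0, l2, 0; 0, 0, l3] - 1)
          + (Rᵀ * !![l1, 0, 0; 0, l2, 0; 0, 0, l3] - 1)ᵀ)))) :
    (∀ R : Matrix (Fin 3) (Fin 3) ℝ, Rᵀ * R = 1 → R.det = 1 →
      W R ≤ (l1 + 1)^2 + (l2 + 1)^2 + (l3 - 1)^2) ∧
    W !![-1, 0, 0; 0, -1, 0; 0, 0, 1] = (l1 + 1)^2 + (l2 + 1)^2 + (l3 - 1)^2 := by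
  subst hW
  refine ⟨fun R hRtR hdet => ?_, ?_⟩
  · have hR : R ∈ specialOrthogonalGroup (Fin 3) ℝ :=
      ⟨(mem_orthogonalGroup_iff' _ _).2 hRtR, hdet⟩
    rw [← diagonal_vec3]
    calc _ ≤ trace ((Rᵀ * diagonal ![l1, l2, l3] - 1)ᵀ * (Rᵀ * diagonal ![l1, l2, l3] - 1)) :=
          trace_symm_part_sq_le _
      _ = l1 ^ 2 + l2 ^ 2 + l3 ^ 2 - 2 * (l1 * R 0 0 + l2 * R 1 1 + l3 * R 2 2) + 3 := by
          rw [trace_sub_one_transpose_mul_self,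
            trace_transpose_mul_self_transpose_mul_of_mem_orthogonalGroup hR.1, diagonal_transpose,
            diagonal_mul_diagonal, trace_diagonal, trace_transpose_mul_diagonal]
          simp only [Fin.sum_univ_three, cons_val_zero, cons_val_one, cons_val, Fintype.card_fin,
            Nat.cast_ofNat]
          ring
      _ ≤ _ := by
          linarith [neg_add_sub_le_weighted_diag_of_mem_specialOrthogonalGroup hR h12 h23
            (h3.le.trans h23)]
  · simp [trace_fin_three, mul_apply, Fin.sum_univ_three]
    ring
end

section
/- (SO(3) global minimum, case λ₁+λ₂ ≤ 2) Let λ₁ ≥ λ₂ ≥ λ₃ > 0 with λ₁+λ₂ ≤ 2 and D = diag(λ₁,λ₂,λ₃). Then for every R ∈ SO(3), ‖sym(RᵀD − I)‖² ≥ (λ₁−1)² + (λ₂−1)² + (λ₃−1)², i.e. R = I is a global minimizer. -/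
/-!
For a rotation `R` the energy `‖sym(RᵀD - I)‖²` depends on `R` only through its diagonal
`d = (R₀₀, R₁₁, R₂₂)`: the row norms are `1`, and the off-diagonal products `Rᵢⱼ Rⱼᵢ` are
`Rᵢᵢ Rⱼⱼ - Rₖₖ` by the cofactor identity `adj R = Rᵀ`. On the region `dᵢ ≤ 1`,
`1 + d₀ - d₁ - d₂ ≥ 0`, which contains the diagonals of all rotations, the energy minus its value
at `d = (1, 1, 1)` is a sum of nonnegative terms as soon as `λ₁ + λ₂ ≤ 2`.
-/

open Matrix

section Orthogonal

variable {n α : Type*} [Fintype n] [DecidableEq n]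

lemma Matrix.adjugate_eq_transpose_of_orthogonal [CommRing α] {R : Matrix n n α}
    (hR : Rᵀ * R = 1) (hdet : R.det = 1) : adjugate R = Rᵀ := by
  calc adjugate R = Rᵀ * (R * adjugate R) := by rw [← Matrix.mul_assoc, hR, Matrix.one_mul]
    _ = Rᵀ := by rw [mul_adjugate, hdet, one_smul, Matrix.mul_one]

lemma Matrix.sum_sq_row_eq_one_of_orthogonal [CommRing α] {R : Matrix n n α}
    (hR : Rᵀ * R = 1) (i : n) : ∑ j, R i j ^ 2 = 1 := by
  have h : R * Rᵀ = 1 := mul_eq_one_comm.mp hR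
  simpa [mul_apply, sq] using congrFun₂ h i i

lemma Matrix.diag_le_one_of_orthogonal {R : Matrix n n ℝ} (hR : Rᵀ * R = 1) (i : n) :
    R i i ≤ 1 := by
  have hsq : R i i ^ 2 ≤ 1 := by
    rw [← sum_sq_row_eq_one_of_orthogonal hR i]
    exact Finset.single_le_sum (f := fun j => R i j ^ 2) (fun j _ => sq_nonneg _)
      (Finset.mem_univ i)
  nlinarith

end Orthogonal

section Rotation

variable {R : Matrix (Fin 3) (Fin 3) ℝ}

lemma Matrix.diag_eq_cofactor_of_rotation (hR : Rᵀ * R = 1) (hdet : R.det = 1) :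
    R 1 1 * R 2 2 - R 1 2 * R 2 1 = R 0 0 ∧ R 0 0 * R 2 2 - R 0 2 * R 2 0 = R 1 1 ∧
      R 0 0 * R 1 1 - R 0 1 * R 1 0 = R 2 2 := by
  have h := adjugate_eq_transpose_of_orthogonal hR hdet
  have h0 := congrFun₂ h 0 0
  have h1 := congrFun₂ h 1 1
  have h2 := congrFun₂ h 2 2
  simp [adjugate_fin_three] at h0 h1 h2
  exact ⟨by linarith, by linarith, by linarith⟩

lemma Matrix.sum_sq_rows_of_rotation (hR : Rᵀ * R = 1) :
    R 0 0 ^ 2 + R 0 1 ^ 2 + R 0 2 ^ 2 = 1 ∧ R 1 0 ^ 2 + R 1 1 ^ 2 + R 1 2 ^ 2 = 1 ∧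
      R 2 0 ^ 2 + R 2 1 ^ 2 + R 2 2 ^ 2 = 1 := by
  have h := sum_sq_row_eq_one_of_orthogonal hR
  simp only [Fin.sum_univ_three] at h
  exact ⟨h 0, h 1, h 2⟩

/-- The squared norm of the skew part `R - Rᵀ` equals `(1 + tr R) (3 - tr R)`. -/
lemma Matrix.neg_one_le_trace_of_rotation (hR : Rᵀ * R = 1) (hdet : R.det = 1) :
    -1 ≤ trace R := by
  obtain ⟨c0, c1, c2⟩ := diag_eq_cofactor_of_rotation hR hdet
  obtain ⟨r0, r1, r2⟩ := sum_sq_rows_of_rotation hR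
  rw [trace_fin_three]
  nlinarith [sq_nonneg (1 + R 0 0 + R 1 1 + R 2 2), sq_nonneg (R 1 2 - R 2 1),
    sq_nonneg (R 0 2 - R 2 0), sq_nonneg (R 0 1 - R 1 0)]

lemma Matrix.one_add_diag_sub_diag_sub_diag_nonneg_of_rotation (hR : Rᵀ * R = 1)
    (hdet : R.det = 1) : 0 ≤ 1 + R 0 0 - R 1 1 - R 2 2 := by
  set S : Matrix (Fin 3) (Fin 3) ℝ := diagonal ![1, -1, -1]
  have hS : Sᵀ * S = 1 := by
    rw [diagonal_transpose, diagonal_mul_diagonal, ← diagonal_one]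
    congr 1; ext i; fin_cases i <;> norm_num
  have hRS : (R * S)ᵀ * (R * S) = 1 := by
    rw [transpose_mul, Matrix.mul_assoc, ← Matrix.mul_assoc Rᵀ, hR, Matrix.one_mul, hS]
  have hdetRS : (R * S).det = 1 := by
    simp [S, det_mul, hdet, Fin.prod_univ_three]
  have htrace := neg_one_le_trace_of_rotation hRS hdetRS
  simp [S, trace_fin_three] at htrace
  linarith

lemma Matrix.trace_sq_sym_sub_one_of_rotation (hR : Rᵀ * R = 1) (hdet : R.det = 1)
    (l1 l2 l3 : ℝ) :
    let S := (1/2 : ℝ) • ((Rᵀ * !![l1, 0, 0; 0, l2, 0; 0, 0, l3] - 1)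
      + (Rᵀ * !![l1, 0, 0; 0, l2, 0; 0, 0, l3] - 1)ᵀ)
    trace (Sᵀ * S) = ((l1 ^ 2 + l2 ^ 2 + l3 ^ 2) + (l1 * R 0 0 + l2 * R 1 1 + l3 * R 2 2) ^ 2
      - 2 * (l2 * l3 * R 0 0 + l1 * l3 * R 1 1 + l1 * l2 * R 2 2)) / 2
      - 2 * (l1 * R 0 0 + l2 * R 1 1 + l3 * R 2 2) + 3 := by
  obtain ⟨c0, c1, c2⟩ := diag_eq_cofactor_of_rotation hR hdet
  obtain ⟨r0, r1, r2⟩ := sum_sq_rows_of_rotation hR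
  simp [trace_fin_three, mul_apply, Fin.sum_univ_three, one_apply]
  linear_combination (l1 ^ 2 / 2) * r0 + (l2 ^ 2 / 2) * r1 + (l3 ^ 2 / 2) * r2
    - l2 * l3 * c0 - l1 * l3 * c1 - l1 * l2 * c2

end Rotation

lemma sum_sq_sub_one_le_energy {l1 l2 l3 d1 d2 d3 : ℝ} (h12 : l2 ≤ l1) (h23 : l3 ≤ l2)
    (h3 : 0 ≤ l3) (hsum : l1 + l2 ≤ 2) (hd1 : d1 ≤ 1) (hd2 : d2 ≤ 1) (hd3 : d3 ≤ 1)
    (hd : 0 ≤ 1 + d1 - d2 - d3) :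
    (l1 - 1) ^ 2 + (l2 - 1) ^ 2 + (l3 - 1) ^ 2 ≤ ((l1 ^ 2 + l2 ^ 2 + l3 ^ 2)
      + (l1 * d1 + l2 * d2 + l3 * d3) ^ 2 - 2 * (l2 * l3 * d1 + l1 * l3 * d2 + l1 * l2 * d3)) / 2
      - 2 * (l1 * d1 + l2 * d2 + l3 * d3) + 3 := by
  set x1 := 1 - d1
  set x2 := 1 - d2
  set x3 := 1 - d3
  have key : ((l1 ^ 2 + l2 ^ 2 + l3 ^ 2) + (l1 * d1 + l2 * d2 + l3 * d3) ^ 2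
      - 2 * (l2 * l3 * d1 + l1 * l3 * d2 + l1 * l2 * d3)) / 2
      - 2 * (l1 * d1 + l2 * d2 + l3 * d3) + 3 - ((l1 - 1) ^ 2 + (l2 - 1) ^ 2 + (l3 - 1) ^ 2)
      = (l1 * x1 + l2 * x2 + l3 * x3) ^ 2 / 2 + (2 - l1 - l2) * (l1 * x1 + l2 * x2 + l3 * x3)
        + (l1 + l3) * (l2 - l3) * x3 + l3 * (l1 - l2) * (x2 + x3 - x1) := by
    simp only [x1, x2, x3]; ring
  have hx1 : 0 ≤ x1 := by linarith
  have hx2 : 0 ≤ x2 := by linarith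
  have hx3 : 0 ≤ x3 := by linarith
  have hl2 : 0 ≤ l2 := h3.trans h23
  have hl1 : 0 ≤ l1 := hl2.trans h12
  have t1 : 0 ≤ (2 - l1 - l2) * (l1 * x1 + l2 * x2 + l3 * x3) := by
    apply mul_nonneg <;> [linarith; positivity]
  have t2 : 0 ≤ (l1 + l3) * (l2 - l3) * x3 := by
    apply mul_nonneg (mul_nonneg _ _) hx3 <;> linarith
  have t3 : 0 ≤ l3 * (l1 - l2) * (x2 + x3 - x1) := by
    apply mul_nonneg (mul_nonneg h3 _) <;> linarith
  linarith [sq_nonneg (l1 * x1 + l2 * x2 + l3 * x3)]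

theorem stmt17 (l1 l2 l3 : ℝ) (h12 : l1 ≥ l2) (h23 : l2 ≥ l3) (h3 : l3 > 0)
    (hsum : l1 + l2 ≤ 2)
    (W : Matrix (Fin 3) (Fin 3) ℝ → ℝ)
    (hW : W = fun R =>
      Matrix.trace (((1/2 : ℝ) • ((Rᵀ * !![l1, 0, 0; 0, l2, 0; 0, 0, l3] - 1)
          + (Rᵀ * !![l1, 0, 0; 0, l2, 0; 0, 0, l3] - 1)ᵀ))ᵀ *
        ((1/2 : ℝ) • ((Rᵀ * !![l1, 0, 0; 0, l2, 0; 0, 0, l3] - 1)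
          + (Rᵀ * !![l1, 0, 0; 0, l2, 0; 0, 0, l3] - 1)ᵀ)))) :
    ∀ R : Matrix (Fin 3) (Fin 3) ℝ, Rᵀ * R = 1 → R.det = 1 →
      (l1 - 1)^2 + (l2 - 1)^2 + (l3 - 1)^2 ≤ W R := by
  intro R hR hdet
  subst hW
  dsimp only
  rw [trace_sq_sym_sub_one_of_rotation hR hdet]
  exact sum_sq_sub_one_le_energy h12 h23 h3.le hsum (diag_le_one_of_orthogonal hR 0)
    (diag_le_one_of_orthogonal hR 1) (diag_le_one_of_orthogonal hR 2)
    (one_add_diag_sub_diag_sub_diag_nonneg_of_rotation hR hdet)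
end

section
/- (Isotropic case λ₁=λ₂=λ₃=λ ≤ 1) Let λ ∈ (0,1] and D = λI₃. Then for every R ∈ SO(3), ‖sym(λ Rᵀ − I)‖² ≥ 3(λ−1)², with equality iff R = I. -/
/-!
Write `t = tr R`. Orthogonality gives `‖R - 1‖² = 2 (3 - t)`, so `t ≤ 3` with equality only at
`R = 1`. For a rotation `adj R = Rᵀ`, and for any `3 × 3` matrix `tr (A²) = (tr A)² - 2 tr (adj A)`;
hence `tr (R²) = t² - 2t` and the energy depends on `t` alone:
`‖sym (λ Rᵀ - 1)‖² = 3 (λ - 1)² + (λ / 2) (3 - t) (4 - λ (t + 1))`.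
Since `λ ≤ 1`, the last factor is positive whenever `t < 3`.
-/

open Matrix

section Orthogonal

variable {n : Type*} [Fintype n] [DecidableEq n]

theorem trace_transpose_mul_self_sub_one {R : Matrix n n ℝ} (hR : Rᵀ * R = 1) :
    trace ((R - 1)ᵀ * (R - 1)) = 2 * (Fintype.card n - trace R) := by
  simp only [transpose_sub, transpose_one, sub_mul, mul_sub, hR, one_mul, mul_one,
    trace_sub, trace_one, trace_transpose]
  ring

theorem trace_le_card_of_transpose_mul_self_eq_one {R : Matrix n n ℝ} (hR : Rᵀ * R = 1) :
    trace R ≤ Fintype.card n := by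
  have h := (posSemidef_conjTranspose_mul_self (R - 1)).trace_nonneg
  rw [conjTranspose_eq_transpose_of_trivial, trace_transpose_mul_self_sub_one hR] at h
  linarith

theorem trace_eq_card_iff_of_transpose_mul_self_eq_one {R : Matrix n n ℝ} (hR : Rᵀ * R = 1) :
    trace R = Fintype.card n ↔ R = 1 := by
  have h := trace_conjTranspose_mul_self_eq_zero_iff (A := R - 1)
  rw [conjTranspose_eq_transpose_of_trivial, trace_transpose_mul_self_sub_one hR,
    sub_eq_zero] at h
  constructor
  · intro ht
    exact h.mp (by rw [ht]; ring)
  · rintro rfl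
    simp

theorem trace_transpose_mul_self_symm_smul_transpose_sub_one (A : Matrix n n ℝ) (l : ℝ) :
    trace (((1/2 : ℝ) • ((l • Aᵀ - 1) + (l • Aᵀ - 1)ᵀ))ᵀ *
        ((1/2 : ℝ) • ((l • Aᵀ - 1) + (l • Aᵀ - 1)ᵀ))) =
      l ^ 2 / 2 * (trace (A * A) + trace (Aᵀ * A)) - 2 * l * trace A + Fintype.card n := by
  simp only [transpose_smul, transpose_add, transpose_sub, transpose_transpose, transpose_one,
    add_mul, mul_add, sub_mul, mul_sub, smul_mul_assoc, mul_smul_comm, mul_one, one_mul,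
    trace_smul, trace_add, trace_sub, trace_one, trace_transpose, smul_eq_mul]
  rw [trace_mul_comm A Aᵀ, ← trace_transpose (Aᵀ * Aᵀ), transpose_mul, transpose_transpose]
  ring

end Orthogonal

theorem adjugate_eq_transpose_of_transpose_mul_self_eq_one {n α : Type*} [Fintype n]
    [DecidableEq n] [CommRing α] {R : Matrix n n α} (hR : Rᵀ * R = 1) (hdet : R.det = 1) :
    adjugate R = Rᵀ :=
  calc adjugate R = adjugate R * (R * Rᵀ) := by rw [mul_eq_one_comm.mp hR, mul_one]
    _ = Rᵀ := by rw [← mul_assoc, adjugate_mul, hdet, one_smul, one_mul]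

theorem trace_mul_self_fin_three {α : Type*} [CommRing α] (A : Matrix (Fin 3) (Fin 3) α) :
    trace (A * A) = trace A ^ 2 - 2 * trace (adjugate A) := by
  simp [trace_fin_three, adjugate_fin_three, mul_apply, Fin.sum_univ_three]
  ring

theorem isotropic_energy_bound {l t : ℝ} (hl0 : 0 < l) (hl1 : l ≤ 1) (ht : t ≤ 3) :
    3 * (l - 1) ^ 2 ≤ l ^ 2 / 2 * (t ^ 2 - 2 * t + 3) - 2 * l * t + 3 ∧
      (l ^ 2 / 2 * (t ^ 2 - 2 * t + 3) - 2 * l * t + 3 = 3 * (l - 1) ^ 2 ↔ t = 3) := by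
  rcases ht.lt_or_eq with ht | rfl
  · have hfactor : 0 < 4 - l * (t + 1) := by
      rcases le_or_gt (t + 1) 0 with h | h
      · nlinarith [mul_nonpos_of_nonneg_of_nonpos hl0.le h]
      · nlinarith [mul_le_mul_of_nonneg_right hl1 h.le]
    have hgap : l ^ 2 / 2 * (t ^ 2 - 2 * t + 3) - 2 * l * t + 3 - 3 * (l - 1) ^ 2 =
        l / 2 * ((3 - t) * (4 - l * (t + 1))) := by ring
    have hpos : 0 < l / 2 * ((3 - t) * (4 - l * (t + 1))) :=
      mul_pos (half_pos hl0) (mul_pos (sub_pos.mpr ht) hfactor)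
    exact ⟨by linarith, iff_of_false (by linarith) ht.ne⟩
  · exact ⟨(by ring : _ = _).ge, iff_of_true (by ring) rfl⟩

theorem stmt19 (l : ℝ) (hl : l ∈ Set.Ioc (0 : ℝ) 1)
    (W : Matrix (Fin 3) (Fin 3) ℝ → ℝ)
    (hW : W = fun R =>
      Matrix.trace (((1/2 : ℝ) • ((l • Rᵀ - 1) + (l • Rᵀ - 1)ᵀ))ᵀ *
        ((1/2 : ℝ) • ((l • Rᵀ - 1) + (l • Rᵀ - 1)ᵀ)))) :
    ∀ R : Matrix (Fin 3) (Fin 3) ℝ, Rᵀ * R = 1 → R.det = 1 →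
      3 * (l - 1)^2 ≤ W R ∧ (W R = 3 * (l - 1)^2 ↔ R = 1) := by
  intro R hR hdet
  have hWR : W R = l ^ 2 / 2 * (trace R ^ 2 - 2 * trace R + 3) - 2 * l * trace R + 3 := by
    simp only [hW]
    rw [trace_transpose_mul_self_symm_smul_transpose_sub_one, trace_mul_self_fin_three,
      adjugate_eq_transpose_of_transpose_mul_self_eq_one hR hdet, trace_transpose, hR, trace_one,
      Fintype.card_fin]
    push_cast
    ring
  have htr := trace_le_card_of_transpose_mul_self_eq_one hR
  rw [← trace_eq_card_iff_of_transpose_mul_self_eq_one hR, hWR]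
  rw [Fintype.card_fin] at htr ⊢
  exact_mod_cast isotropic_energy_bound hl.1 hl.2 htr
end
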